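/- If there exists a sorting network of size k ≥ 1 on n ≥ 2 channels, then there exists a sorting network of size k on n channels whose first comparator is (1,2); equivalently, the singleton set containing the one-comparator network (1,2) is a complete set of filters on n channels. -/

import Mathlib

/-- Applying a single comparator `c = (i, j)`: the minimum of the two values goes to
channel `i` and the maximum to channel `j`. -/
def applyComp {n : ℕ} {α : Type*} [LinearOrder α] (c : Fin n × Fin n) (x : Fin n → α) :
    Fin n → α :=
  fun k => if k = c.1 then min (x c.1) (x c.2)
    else if k = c.2 then max (x c.1) (x c.2)
    else x k

/-- Propagating an input vector through a comparator network (a list of comparators). -/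
def runNet {n : ℕ} {α : Type*} [LinearOrder α] (C : List (Fin n × Fin n)) (x : Fin n → α) :
    Fin n → α :=
  C.foldl (fun v c => applyComp c v) x

/-- A standard comparator network: every comparator `(i, j)` satisfies `i < j`. -/
def Standard {n : ℕ} (C : List (Fin n × Fin n)) : Prop :=
  ∀ c ∈ C, c.1 < c.2

/-- A sorting network: a standard comparator network sorting every Boolean input. -/
def IsSortingNet {n : ℕ} (C : List (Fin n × Fin n)) : Prop :=
  Standard C ∧ ∀ x : Fin n → Bool, Monotone (runNet C x)

/-- The set of outputs of a comparator network on Boolean inputs. -/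
def outputs {n : ℕ} (C : List (Fin n × Fin n)) : Set (Fin n → Bool) :=
  Set.range (runNet C)

/-- The action of a permutation of channels on a set of Boolean vectors. -/
def permSet {n : ℕ} (π : Equiv.Perm (Fin n)) (S : Set (Fin n → Bool)) :
    Set (Fin n → Bool) :=
  (fun x => x ∘ ⇑π.symm) '' S

/-- `Ca` subsumes `Cb`: some permutation maps `outputs Ca` into `outputs Cb`. -/
def Subsumes {n : ℕ} (Ca Cb : List (Fin n × Fin n)) : Prop :=
  ∃ π : Equiv.Perm (Fin n), permSet π (outputs Ca) ⊆ outputs Cb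

/-- `sortSize n` is the least size of a sorting network on `n` channels. -/
noncomputable def sortSize (n : ℕ) : ℕ :=
  sInf {k | ∃ C : List (Fin n × Fin n), IsSortingNet C ∧ C.length = k}

/-- Number of ones in a Boolean vector. -/
def ones {n : ℕ} (x : Fin n → Bool) : ℕ :=
  (Finset.univ.filter fun i => x i = true).card

/-- A (finite) complete set of filters on `n` channels. -/
def CompleteFilters (n : ℕ) (F : Finset (List (Fin n × Fin n))) : Prop :=
  (∃ C : List (Fin n × Fin n), IsSortingNet C ∧ C.length = sortSize n) ↔
    (∃ C ∈ F, ∃ C' : List (Fin n × Fin n),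
      IsSortingNet (C ++ C') ∧ (C ++ C').length = sortSize n)

/-- `wSet C x k` is the set of positions `i` such that some output vector of `C`
with exactly `k` ones has value `x` at position `i`. -/
def wSet {n : ℕ} (C : List (Fin n × Fin n)) (x : Bool) (k : ℕ) : Set (Fin n) :=
  {i | ∃ v ∈ outputs C, ones v = k ∧ v i = x}

/-! Relabel the channels so that the first comparator of a sorting network becomes `(a, b)`.
The relabelled network is a generalized network, and untangling it gives a standard network
of the same size whose outputs are those of the original up to fixed permutations of inputs
and outputs. A standard network fixes sorted inputs, so the output permutation maps sorted
vectors to sorted vectors; hence it is monotone, i.e. the identity, and the standard network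
sorts. -/

open Equiv

section Comparators

variable {n : ℕ} {α : Type*} [LinearOrder α]

@[simp]
lemma runNet_nil (x : Fin n → α) : runNet [] x = x := rfl

@[simp]
lemma runNet_cons (c : Fin n × Fin n) (L : List (Fin n × Fin n)) (x : Fin n → α) :
    runNet (c :: L) x = runNet L (applyComp c x) := rfl

lemma applyComp_of_monotone {c : Fin n × Fin n} (hc : c.1 ≤ c.2) {x : Fin n → α}
    (hx : Monotone x) : applyComp c x = x := by
  funext k
  simp only [applyComp]
  split_ifs with h1 h2
  · subst h1; exact min_eq_left (hx hc)
  · subst h2; exact max_eq_right (hx hc)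
  · rfl

lemma runNet_of_monotone {L : List (Fin n × Fin n)} (hL : Standard L) {x : Fin n → α}
    (hx : Monotone x) : runNet L x = x := by
  induction L with
  | nil => rfl
  | cons c L ih =>
    rw [Standard, List.forall_mem_cons] at hL
    rw [runNet_cons, applyComp_of_monotone hL.1.le hx, ih hL.2]

lemma applyComp_perm (σ : Perm (Fin n)) (c : Fin n × Fin n) (x : Fin n → α) :
    applyComp (σ c.1, σ c.2) x = applyComp c (x ∘ σ) ∘ σ.symm := by
  funext k
  simp only [applyComp, Function.comp_apply, symm_apply_eq, apply_symm_apply]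

lemma applyComp_swap (c : Fin n × Fin n) (x : Fin n → α) :
    applyComp (c.2, c.1) x = applyComp c x ∘ swap c.1 c.2 := by
  funext k
  by_cases h1 : k = c.1 <;> by_cases h2 : k = c.2 <;>
    simp_all [applyComp, swap_apply_of_ne_of_ne, min_comm, max_comm]

def relabel (σ : Perm (Fin n)) (L : List (Fin n × Fin n)) : List (Fin n × Fin n) :=
  L.map fun c => (σ c.1, σ c.2)

@[simp]
lemma relabel_cons (σ : Perm (Fin n)) (c : Fin n × Fin n) (L : List (Fin n × Fin n)) :
    relabel σ (c :: L) = (σ c.1, σ c.2) :: relabel σ L := rfl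

lemma relabel_trans (σ τ : Perm (Fin n)) (L : List (Fin n × Fin n)) :
    relabel (σ.trans τ) L = relabel τ (relabel σ L) := by
  simp [relabel, Function.comp_def]

lemma runNet_relabel (σ : Perm (Fin n)) (L : List (Fin n × Fin n)) (x : Fin n → α) :
    runNet (relabel σ L) x = runNet L (x ∘ σ) ∘ σ.symm := by
  induction L generalizing x with
  | nil => funext k; simp [relabel]
  | cons c L ih =>
    rw [relabel_cons, runNet_cons, ih, applyComp_perm, runNet_cons]
    simp [Function.comp_def]

/-- Whenever a comparator points upwards, swap its two channels in it and in everything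
after it. -/
theorem exists_standard_untangling (L : List (Fin n × Fin n)) (hL : ∀ c ∈ L, c.1 ≠ c.2)
    (σ : Perm (Fin n)) :
    ∃ (L' : List (Fin n × Fin n)) (ρ : Perm (Fin n)), Standard L' ∧ L'.length = L.length ∧
      ∀ x : Fin n → α, runNet (relabel σ L) x = runNet L' x ∘ ρ := by
  induction L generalizing σ with
  | nil => exact ⟨[], 1, by simp [Standard], rfl, fun x => rfl⟩
  | cons c rest ih =>
    rw [List.forall_mem_cons] at hL
    rcases (σ.injective.ne hL.1).lt_or_gt with hlt | hgt
    · obtain ⟨T, ρ, hT, hlen, hrun⟩ := ih hL.2 σ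
      refine ⟨(σ c.1, σ c.2) :: T, ρ, List.forall_mem_cons.2 ⟨hlt, hT⟩, by simp [hlen],
        fun x => ?_⟩
      rw [relabel_cons, runNet_cons, hrun, runNet_cons]
    · set τ := swap (σ c.1) (σ c.2)
      obtain ⟨T, ρ, hT, hlen, hrun⟩ := ih hL.2 (σ.trans τ)
      refine ⟨(σ c.2, σ c.1) :: T, τ.trans ρ, List.forall_mem_cons.2 ⟨hgt, hT⟩,
        by simp [hlen], fun x => ?_⟩
      have hrest : relabel σ rest = relabel τ (relabel (σ.trans τ) rest) := by
        rw [← relabel_trans, trans_assoc, swap_swap, trans_refl]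
      rw [relabel_cons, runNet_cons, hrest, runNet_relabel, hrun, runNet_cons,
        applyComp_swap (σ c.1, σ c.2)]
      funext k
      simp [τ]

end Comparators

lemma monotone_of_forall_monotone_bool_comp {β γ : Type*} [Preorder β] [LinearOrder γ]
    {f : β → γ} (h : ∀ x : γ → Bool, Monotone x → Monotone (x ∘ f)) : Monotone f := by
  intro i j hij
  by_contra hlt
  have hx : Monotone fun t => decide (f i ≤ t) := fun a b hab => by
    simpa [Bool.le_iff_imp] using fun hia => hia.trans hab
  simpa [Bool.le_iff_imp, hlt] using h _ hx hij

lemma exists_perm_apply_eq_pair {β : Type*} [DecidableEq β] {i j a b : β} (hij : i ≠ j)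
    (hab : a ≠ b) : ∃ π : Perm β, π i = a ∧ π j = b := by
  refine ⟨(swap i a).trans (swap (swap i a j) b), ?_, swap_apply_left _ _⟩
  have hj : swap i a j ≠ a := by
    simpa using (swap i a).injective.ne hij.symm
  rw [trans_apply, swap_apply_left, swap_apply_of_ne_of_ne hj.symm hab]

section Sorting

variable {n : ℕ}

lemma IsSortingNet.ne_nil {C : List (Fin n × Fin n)} (hC : IsSortingNet C) {a b : Fin n}
    (hab : a < b) : C ≠ [] := by
  rintro rfl
  simpa [hab.ne', Bool.le_iff_imp] using hC.2 (fun t => decide (t = a)) hab.le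

lemma isSortingNet_of_runNet_eq {C D : List (Fin n × Fin n)} (hC : IsSortingNet C)
    (hD : Standard D) (π μ : Perm (Fin n))
    (h : ∀ x : Fin n → Bool, runNet D x = runNet C (x ∘ π) ∘ μ) : IsSortingNet D := by
  have hμ : Monotone μ.symm := monotone_of_forall_monotone_bool_comp fun x hx => by
    have hfix := h x
    rw [runNet_of_monotone hD hx] at hfix
    have : x ∘ μ.symm = runNet C (x ∘ π) := by
      funext k
      simpa using congrFun hfix (μ.symm k)
    exact this ▸ hC.2 _
  have hμ1 : μ = 1 := by
    have hid : ⇑μ.symm = id := (hμ.strictMono_of_injective μ.symm.injective).eq_id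
    exact Equiv.ext fun i => μ.symm.injective (by simp [hid])
  refine ⟨hD, fun x => ?_⟩
  rw [h, hμ1]
  exact hC.2 _

theorem exists_isSortingNet_head_eq {C : List (Fin n × Fin n)} (hC : IsSortingNet C)
    (hne : C ≠ []) {a b : Fin n} (hab : a < b) :
    ∃ D : List (Fin n × Fin n), IsSortingNet D ∧ D.length = C.length ∧ D.head? = some (a, b) := by
  obtain ⟨c, rest, rfl⟩ := List.exists_cons_of_ne_nil hne
  have hstd : Standard (c :: rest) := hC.1
  rw [Standard, List.forall_mem_cons] at hstd
  obtain ⟨π, hπ1, hπ2⟩ := exists_perm_apply_eq_pair hstd.1.ne hab.ne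
  obtain ⟨T, ρ, hT, hlen, hrun⟩ :=
    exists_standard_untangling (α := Bool) rest (fun d hd => (hstd.2 d hd).ne) π
  have hD : Standard ((a, b) :: T) := List.forall_mem_cons.2 ⟨hab, hT⟩
  refine ⟨(a, b) :: T, isSortingNet_of_runNet_eq hC hD π (ρ.symm.trans π.symm) fun x => ?_,
    by simp [hlen], rfl⟩
  have hrel := runNet_relabel π (c :: rest) x
  rw [relabel_cons, hπ1, hπ2, runNet_cons, hrun] at hrel
  funext k
  simpa using congrFun hrel (ρ.symm k)

theorem completeFilters_singleton {a b : Fin n} (hab : a < b) : CompleteFilters n {[(a, b)]} := by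
  refine ⟨fun ⟨C, hC, hlen⟩ => ?_, fun ⟨F, _, C', hsort, hlen⟩ => ⟨F ++ C', hsort, hlen⟩⟩
  obtain ⟨D, hD, hDlen, hDhead⟩ := exists_isSortingNet_head_eq hC (hC.ne_nil hab) hab
  obtain ⟨D', rfl⟩ := List.head?_eq_some_iff.1 hDhead
  exact ⟨_, Finset.mem_singleton_self _, D', hD, hDlen.trans hlen⟩

end Sorting

/-- If a sorting network of size `k ≥ 1` on `n ≥ 2` channels exists, then one exists whose
first comparator is `(1,2)` (channels `0` and `1` in 0-based indexing); equivalently, the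
singleton set containing the one-comparator network `(1,2)` is a complete set of filters. -/
theorem first_comparator_one_two (n k : ℕ) (hn : 2 ≤ n) (hk : 1 ≤ k) :
    ((∃ C : List (Fin n × Fin n), IsSortingNet C ∧ C.length = k) →
      ∃ C : List (Fin n × Fin n), IsSortingNet C ∧ C.length = k ∧
        C.head? = some (⟨0, by omega⟩, ⟨1, by omega⟩)) ∧
      CompleteFilters n {[((⟨0, by omega⟩ : Fin n), (⟨1, by omega⟩ : Fin n))]} := by
  have h01 : (⟨0, by omega⟩ : Fin n) < ⟨1, by omega⟩ := Fin.mk_lt_mk.2 Nat.zero_lt_one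
  refine ⟨fun ⟨C, hC, hlen⟩ => ?_, completeFilters_singleton h01⟩
  obtain ⟨D, hD, hDlen, hDhead⟩ :=
    exists_isSortingNet_head_eq hC (List.ne_nil_of_length_pos (hlen ▸ hk)) h01
  exact ⟨D, hD, hDlen.trans hlen, hDhead⟩
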